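/- Let g₁, g₂, g₃ : ℝ → ℝ be cubic polynomials satisfying the interpolation conditions g₁(i-3)=d₁, g₁(i-1)=d₂=g₂(i-1), g₂(i+1)=d₃=g₃(i+1), g₃(i+3)=d₄, C² matching at i-1 and i+1, and the natural boundary conditions g₁''(i-3)=0 and g₃''(i+3)=0. Then g₂(i) = -3/40·d₁ + 23/40·d₂ + 23/40·d₃ - 3/40·d₄. -/

import Mathlib

/-!
Write `M₂, M₃` for the common second derivatives ("moments") at the inner knots `i ∓ 1`.
Integrating a cubic over a knot interval of length `h` expresses its end slopes through its end
values and end moments, so `C¹` matching at the inner knots, with the natural conditions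
`M₁ = M₄ = 0`, gives the three-moment equations
`4 M₂ + M₃ = 3/2 (d₁ - 2 d₂ + d₃)` and `M₂ + 4 M₃ = 3/2 (d₂ - 2 d₃ + d₄)`.
Their sum gives `M₂ + M₃ = 3/10 (d₁ - d₂ - d₃ + d₄)`, and the midpoint value of a cubic is
`(d₂ + d₃)/2 - h²/16 (M₂ + M₃)` with `h = 2`.
-/

section Cubic

variable {f : ℝ → ℝ} {a b c d : ℝ}

theorem deriv_cubic (hf : ∀ x, f x = a * x ^ 3 + b * x ^ 2 + c * x + d) (t : ℝ) :
    deriv f t = 3 * a * t ^ 2 + 2 * b * t + c := by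
  have hasDeriv : HasDerivAt (fun x => a * x ^ 3 + b * x ^ 2 + c * x + d)
      (3 * a * t ^ 2 + 2 * b * t + c) t :=
    ((((hasDerivAt_pow 3 t).const_mul a).add ((hasDerivAt_pow 2 t).const_mul b)).add
      ((hasDerivAt_id t).const_mul c)).add_const d |>.congr_deriv (by push_cast; ring)
  rw [show f = _ from funext hf, hasDeriv.deriv]

theorem iteratedDeriv_two_cubic (hf : ∀ x, f x = a * x ^ 3 + b * x ^ 2 + c * x + d) (t : ℝ) :
    iteratedDeriv 2 f t = 6 * a * t + 2 * b := by
  have hf' : ∀ x, deriv f x = 0 * x ^ 3 + (3 * a) * x ^ 2 + (2 * b) * x + c := fun x => by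
    rw [deriv_cubic hf]; ring
  rw [iteratedDeriv_succ, iteratedDeriv_one, deriv_cubic hf']
  ring

theorem cubic_sub_mul_deriv_left (hf : ∀ x, f x = a * x ^ 3 + b * x ^ 2 + c * x + d)
    (x y : ℝ) :
    (y - x) * deriv f x = f y - f x
      - (y - x) ^ 2 / 6 * (2 * iteratedDeriv 2 f x + iteratedDeriv 2 f y) := by
  rw [deriv_cubic hf, iteratedDeriv_two_cubic hf, iteratedDeriv_two_cubic hf, hf, hf]
  ring

theorem cubic_sub_mul_deriv_right (hf : ∀ x, f x = a * x ^ 3 + b * x ^ 2 + c * x + d)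
    (x y : ℝ) :
    (y - x) * deriv f y = f y - f x
      + (y - x) ^ 2 / 6 * (iteratedDeriv 2 f x + 2 * iteratedDeriv 2 f y) := by
  rw [deriv_cubic hf, iteratedDeriv_two_cubic hf, iteratedDeriv_two_cubic hf, hf, hf]
  ring

theorem cubic_midpoint (hf : ∀ x, f x = a * x ^ 3 + b * x ^ 2 + c * x + d) (x y : ℝ) :
    f ((x + y) / 2) = (f x + f y) / 2
      - (y - x) ^ 2 / 16 * (iteratedDeriv 2 f x + iteratedDeriv 2 f y) := by
  rw [iteratedDeriv_two_cubic hf, iteratedDeriv_two_cubic hf, hf, hf, hf]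
  ring

end Cubic

theorem natural_spline_formula (i d₁ d₂ d₃ d₄ : ℝ) (g₁ g₂ g₃ : ℝ → ℝ)
    (a₁ b₁ c₁ δ₁ a₂ b₂ c₂ δ₂ a₃ b₃ c₃ δ₃ : ℝ)
    (hg₁ : ∀ x, g₁ x = a₁ * x ^ 3 + b₁ * x ^ 2 + c₁ * x + δ₁)
    (hg₂ : ∀ x, g₂ x = a₂ * x ^ 3 + b₂ * x ^ 2 + c₂ * x + δ₂)
    (hg₃ : ∀ x, g₃ x = a₃ * x ^ 3 + b₃ * x ^ 2 + c₃ * x + δ₃)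
    (h1 : g₁ (i - 3) = d₁) (h2 : g₁ (i - 1) = d₂)
    (h3 : g₂ (i - 1) = d₂) (h4 : g₂ (i + 1) = d₃)
    (h5 : g₃ (i + 1) = d₃) (h6 : g₃ (i + 3) = d₄)
    (hd1 : deriv g₁ (i - 1) = deriv g₂ (i - 1))
    (hd2 : deriv g₂ (i + 1) = deriv g₃ (i + 1))
    (hdd1 : iteratedDeriv 2 g₁ (i - 1) = iteratedDeriv 2 g₂ (i - 1))
    (hdd2 : iteratedDeriv 2 g₂ (i + 1) = iteratedDeriv 2 g₃ (i + 1))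
    (hnat1 : iteratedDeriv 2 g₁ (i - 3) = 0)
    (hnat2 : iteratedDeriv 2 g₃ (i + 3) = 0) :
    g₂ i = -3 / 40 * d₁ + 23 / 40 * d₂ + 23 / 40 * d₃ - 3 / 40 * d₄ := by
  set M₂ := iteratedDeriv 2 g₂ (i - 1)
  set M₃ := iteratedDeriv 2 g₂ (i + 1)
  have moment_left : 4 * M₂ + M₃ = 3 / 2 * (d₁ - 2 * d₂ + d₃) := by
    have slope₁ := cubic_sub_mul_deriv_right hg₁ (i - 3) (i - 1)
    have slope₂ := cubic_sub_mul_deriv_left hg₂ (i - 1) (i + 1)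
    rw [hdd1, hnat1, hd1, h1, h2] at slope₁
    rw [h3, h4] at slope₂
    linear_combination (3 / 2 : ℝ) * slope₂ - (3 / 2 : ℝ) * slope₁
  have moment_right : M₂ + 4 * M₃ = 3 / 2 * (d₂ - 2 * d₃ + d₄) := by
    have slope₂ := cubic_sub_mul_deriv_right hg₂ (i - 1) (i + 1)
    have slope₃ := cubic_sub_mul_deriv_left hg₃ (i + 1) (i + 3)
    rw [← hdd2, hnat2, ← hd2, h5, h6] at slope₃
    rw [h3, h4] at slope₂
    linear_combination (3 / 2 : ℝ) * slope₃ - (3 / 2 : ℝ) * slope₂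
  have midpoint := cubic_midpoint hg₂ (i - 1) (i + 1)
  rw [show (i - 1 + (i + 1)) / 2 = i by ring, h3, h4] at midpoint
  linear_combination midpoint - (1 / 20 : ℝ) * (moment_left + moment_right)
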